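/- arXiv:2209.01961 — 7 statements merged into one kernel-verified Lean document; each statement's English description precedes it below -/
import Mathlib

section
/- Let π be a 132-avoiding permutation of [n]. Then the number of descents of π (counting position n as a descent) equals the number of maximal value-consecutive increasing subsequences (v-CIS) of π. -/
open Classical

/-- The value of the permutation `π` of `{0,…,n-1}` at (0-indexed) position `t`
(values are also 0-indexed). -/
def permVal {n : ℕ} (π : Equiv.Perm (Fin n)) (t : ℕ) : ℕ :=
  if h : t < n then (π ⟨t, h⟩ : ℕ) else 0

/-- `π` avoids the pattern 132: no positions `a < b < c` with `π a < π c < π b`. -/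
def Avoids132 {n : ℕ} (π : Equiv.Perm (Fin n)) : Prop :=
  ¬ ∃ a b c : ℕ, a < b ∧ b < c ∧ c < n ∧
      permVal π a < permVal π c ∧ permVal π c < permVal π b

/-- Position `p` starts a maximal value-consecutive increasing subsequence of `π`:
either its value is minimal, or the next smaller value occurs strictly later. -/
def StartsVCIS {n : ℕ} (π : Equiv.Perm (Fin n)) (p : ℕ) : Prop :=
  p < n ∧ (permVal π p = 0 ∨ ∃ q, p < q ∧ q < n ∧ permVal π q + 1 = permVal π p)

lemma permVal_lt {n : ℕ} (π : Equiv.Perm (Fin n)) {t : ℕ} (ht : t < n) :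
    permVal π t < n := by
  simp only [permVal, dif_pos ht]
  exact (π ⟨t, ht⟩).isLt

lemma permVal_inj {n : ℕ} (π : Equiv.Perm (Fin n)) {p q : ℕ} (hp : p < n) (hq : q < n)
    (hpq : permVal π p = permVal π q) : p = q := by
  simp only [permVal, dif_pos hp, dif_pos hq] at hpq
  have h2 : π ⟨p, hp⟩ = π ⟨q, hq⟩ := Fin.val_injective hpq
  have h3 := π.injective h2
  simpa using congrArg Fin.val h3

lemma exists_permVal_eq {n : ℕ} (π : Equiv.Perm (Fin n)) {v : ℕ} (hv : v < n) :
    ∃ k, k < n ∧ permVal π k = v := by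
  refine ⟨(π.symm ⟨v, hv⟩ : ℕ), (π.symm ⟨v, hv⟩).isLt, ?_⟩
  simp [permVal, (π.symm ⟨v, hv⟩).isLt]

/-- For a 132-avoiding permutation, the number of descents (with the last position always
counted as a descent) equals the number of maximal value-consecutive increasing
subsequences. -/
theorem stmt1 (n : ℕ) (π : Equiv.Perm (Fin n)) (h : Avoids132 π) :
    ((Finset.range n).filter
        (fun i => i + 1 = n ∨ permVal π (i + 1) < permVal π i)).card =
    Nat.card {p : ℕ // StartsVCIS π p} := by
  classical
  -- the RHS is the cardinality of a filtered finset
  have hset : {p : ℕ | StartsVCIS π p}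
      = ↑((Finset.range n).filter (fun p => StartsVCIS π p)) := by
    ext p
    simp only [Set.mem_setOf_eq, Finset.coe_filter, Finset.mem_range]
    exact ⟨fun hp => ⟨hp.1, hp⟩, fun hp => hp.2⟩
  have hR : Nat.card {p : ℕ // StartsVCIS π p}
      = ((Finset.range n).filter (fun p => StartsVCIS π p)).card := by
    have h' : Nat.card {p : ℕ // StartsVCIS π p} = {p : ℕ | StartsVCIS π p}.ncard :=
      Nat.card_coe_set_eq _
    rw [h', hset, Set.ncard_coe_finset]
  -- key: the ascent set and the non-start set are in bijection via i ↦ i+1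
  have key :
      ((Finset.range n).filter
          (fun i => ¬(i + 1 = n ∨ permVal π (i + 1) < permVal π i))).card
      = ((Finset.range n).filter (fun p => ¬ StartsVCIS π p)).card := by
    apply Finset.card_bij (fun i _ => i + 1)
    · -- well-defined
      intro i hi
      simp only [Finset.mem_filter, Finset.mem_range, not_or, not_lt] at hi
      obtain ⟨hin, hne, hle⟩ := hi
      have hi1 : i + 1 < n := lt_of_le_of_ne (by omega) hne
      have hlt : permVal π i < permVal π (i + 1) := by
        rcases lt_or_eq_of_le hle with h' | h'
        · exact h'
        · exact absurd (permVal_inj π hin hi1 h') (by omega)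
      simp only [Finset.mem_filter, Finset.mem_range]
      refine ⟨hi1, fun hs => ?_⟩
      rcases hs.2 with h0 | ⟨q, hq1, hq2, hq3⟩
      · omega
      · exact h ⟨i, i + 1, q, by omega, hq1, hq2,
          by
            have : i ≠ q := by omega
            have hne' : permVal π i ≠ permVal π q :=
              fun he => this (permVal_inj π hin hq2 he)
            omega,
          by omega⟩
    · -- injective
      intro a _ b _ hab
      omega
    · -- surjective
      intro p hp
      simp only [Finset.mem_filter, Finset.mem_range] at hp
      obtain ⟨hpn, hns⟩ := hp
      have hne0 : permVal π p ≠ 0 := fun h0 => hns ⟨hpn, Or.inl h0⟩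
      have hnq : ∀ q, ¬(p < q ∧ q < n ∧ permVal π q + 1 = permVal π p) :=
        fun q hq => hns ⟨hpn, Or.inr ⟨q, hq.1, hq.2.1, hq.2.2⟩⟩
      have hvlt : permVal π p < n := permVal_lt π hpn
      obtain ⟨k, hkn, hkv⟩ := exists_permVal_eq π (show permVal π p - 1 < n by omega)
      have hk1 : permVal π k + 1 = permVal π p := by omega
      have hkp : k ≠ p := by
        intro he; subst he; omega
      have hklt : k < p := by
        by_contra hc
        exact hnq k ⟨by omega, hkn, hk1⟩
      have hp0 : 1 ≤ p := by omega
      refine ⟨p - 1, ?_, by omega⟩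
      simp only [Finset.mem_filter, Finset.mem_range, not_or, not_lt]
      have hpe : p - 1 + 1 = p := by omega
      rw [hpe]
      refine ⟨by omega, by omega, ?_⟩
      by_contra hc
      push_neg at hc
      have hk2 : k ≠ p - 1 := by
        intro he
        rw [← he] at hc
        omega
      exact h ⟨k, p - 1, p, by omega, by omega, hpn, by omega, hc⟩
  have h1 := Finset.card_filter_add_card_filter_not
    (s := Finset.range n)
    (p := fun i => i + 1 = n ∨ permVal π (i + 1) < permVal π i)
  have h2 := Finset.card_filter_add_card_filter_not
    (s := Finset.range n) (p := fun p => StartsVCIS π p)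
  rw [Finset.card_range] at h1 h2
  rw [hR]
  omega
end

section
/- Let π be a 132-avoiding permutation of [n], and suppose 1 ≤ i < n is such that πᵢ₊₁ > 1 and the value πᵢ₊₁ − 1 occurs at a position strictly greater than i+1. Then i is a descent of π, i.e., πᵢ > πᵢ₊₁. -/
open Classical

/-- If in a 132-avoiding permutation the value `permVal π (i+1) - 1` is positive and occurs
at a position strictly greater than `i+1`, then `i` is a descent. -/
theorem stmt3 (n : ℕ) (π : Equiv.Perm (Fin n)) (h : Avoids132 π) (i : ℕ)
    (hi : i + 1 < n) (h1 : 0 < permVal π (i + 1))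
    (h2 : ∃ j, i + 1 < j ∧ j < n ∧ permVal π j + 1 = permVal π (i + 1)) :
    permVal π (i + 1) < permVal π i := by
  obtain ⟨j, hij, hjn, hval⟩ := h2
  by_contra hle
  push_neg at hle
  have hi' : i < n := Nat.lt_of_succ_lt hi
  have ei : permVal π i = (π ⟨i, hi'⟩ : ℕ) := dif_pos hi'
  have ei1 : permVal π (i + 1) = (π ⟨i + 1, hi⟩ : ℕ) := dif_pos hi
  have ej : permVal π j = (π ⟨j, hjn⟩ : ℕ) := dif_pos hjn
  have hne1 : permVal π i ≠ permVal π (i + 1) := by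
    rw [ei, ei1]
    intro hc
    have : (⟨i, hi'⟩ : Fin n) = ⟨i + 1, hi⟩ := π.injective (Fin.val_injective hc)
    simp [Fin.ext_iff] at this
  have hne2 : permVal π i ≠ permVal π j := by
    rw [ei, ej]
    intro hc
    have : (⟨i, hi'⟩ : Fin n) = ⟨j, hjn⟩ := π.injective (Fin.val_injective hc)
    simp [Fin.ext_iff] at this
    omega
  exact h ⟨i, i + 1, j, Nat.lt_succ_self i, hij, hjn, by omega, by omega⟩
end

section
/- Let π be a 132-avoiding permutation of [n]. There do not exist indices 1 ≤ i < j < k < l ≤ n such that positions i and k belong to the same maximal value-consecutive increasing subsequence of π while positions j and l belong to a common maximal value-consecutive increasing subsequence distinct from it. (Non-crossing property of the v-CIS decomposition.) -/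
open Classical

/-- Positions `p` and `q` lie in the same maximal value-consecutive increasing
subsequence of `π`: the equivalence generated by "`a < b` and `π b = π a + 1`". -/
def SameVCIS {n : ℕ} (π : Equiv.Perm (Fin n)) (p q : ℕ) : Prop :=
  Relation.EqvGen (fun a b => a < b ∧ b < n ∧ permVal π b = permVal π a + 1) p q

namespace VCISAux

variable {n : ℕ} {π : Equiv.Perm (Fin n)}

/-- The one-step relation. -/
def R (π : Equiv.Perm (Fin n)) (a b : ℕ) : Prop :=
  a < b ∧ b < n ∧ permVal π b = permVal π a + 1

theorem permVal_inj {s t : ℕ} (hs : s < n) (ht : t < n)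
    (h : permVal π s = permVal π t) : s = t := by
  unfold permVal at h
  rw [dif_pos hs, dif_pos ht] at h
  have := π.injective (Fin.val_injective h)
  simpa using congrArg Fin.val this

theorem Rfun {a b c : ℕ} (h1 : R π a b) (h2 : R π a c) : b = c :=
  permVal_inj h1.2.1 h2.2.1 (h1.2.2.trans h2.2.2.symm)

theorem Rinj {a b c : ℕ} (h1 : R π a b) (h2 : R π c b) : a = c := by
  have ha : a < n := lt_trans h1.1 h1.2.1
  have hc : c < n := lt_trans h2.1 h2.2.1
  exact permVal_inj ha hc (Nat.succ_injective (h1.2.2.symm.trans h2.2.2))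

theorem rtg_le {p q : ℕ} (h : Relation.ReflTransGen (R π) p q) : p ≤ q := by
  induction h with
  | refl => exact le_rfl
  | tail _ hstep ih => exact le_of_lt (lt_of_le_of_lt ih hstep.1)

theorem rtg_val_le' {p q : ℕ} (h : Relation.ReflTransGen (R π) p q) :
    permVal π p ≤ permVal π q := by
  induction h with
  | refl => exact le_rfl
  | tail _ hstep ih =>
      have := hstep.2.2
      omega

theorem rtg_eqvGen {p q : ℕ} (h : Relation.ReflTransGen (R π) p q) :
    Relation.EqvGen (R π) p q := by
  induction h with
  | refl => exact Relation.EqvGen.refl p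
  | tail _ hstep ih => exact Relation.EqvGen.trans _ _ _ ih (Relation.EqvGen.rel _ _ hstep)

theorem eqvGen_join {p q : ℕ} (h : Relation.EqvGen (R π) p q) :
    Relation.Join (Relation.ReflTransGen (R π)) p q := by
  have heq : Equivalence (Relation.Join (Relation.ReflTransGen (R π))) := by
    apply Relation.equivalence_join_reflTransGen
    intro a b c hab hac
    exact ⟨b, Relation.ReflGen.refl, (Rfun hac hab) ▸ Relation.ReflTransGen.refl⟩
  induction h with
  | rel a b hab => exact ⟨b, Relation.ReflTransGen.single hab, Relation.ReflTransGen.refl⟩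
  | refl a => exact heq.refl a
  | symm a b _ ih => exact heq.symm ih
  | trans a b c _ _ ih1 ih2 => exact heq.trans ih1 ih2

/-- Backwards comparability: two points reaching the same point are on one chain. -/
theorem chain_comparable {p d : ℕ} (h : Relation.ReflTransGen (R π) p d) :
    ∀ q, Relation.ReflTransGen (R π) q d →
      Relation.ReflTransGen (R π) p q ∨ Relation.ReflTransGen (R π) q p := by
  induction h with
  | refl => exact fun q hq => Or.inr hq
  | @tail b c hpb hbc ih =>
      intro q hq
      rcases Relation.ReflTransGen.cases_tail hq with rfl | ⟨e, hqe, hec⟩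
      · exact Or.inl (hpb.tail hbc)
      · exact ih q (Rinj hec hbc ▸ hqe)

theorem sameVCIS_of_lt {p q : ℕ} (hs : SameVCIS π p q) (hpq : p < q) :
    Relation.ReflTransGen (R π) p q := by
  obtain ⟨d, hpd, hqd⟩ := eqvGen_join hs
  rcases chain_comparable hpd q hqd with h | h
  · exact h
  · exact absurd (rtg_le h) (by omega)

/-- Straddle: if `p →* q`, `p < m ≤ q`, find the step crossing `m`. -/
theorem straddle {p q m : ℕ} (h : Relation.ReflTransGen (R π) p q)
    (h1 : p < m) (h2 : m ≤ q) :
    ∃ a b, Relation.ReflTransGen (R π) p a ∧ R π a b ∧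
      Relation.ReflTransGen (R π) b q ∧ a < m ∧ m ≤ b := by
  induction h with
  | refl => omega
  | @tail y z hpy hyz ih =>
      by_cases hm : m ≤ y
      · obtain ⟨a, b, h3, h4, h5, h6, h7⟩ := ih hm
        exact ⟨a, b, h3, h4, h5.tail hyz, h6, h7⟩
      · exact ⟨y, z, hpy, hyz, Relation.ReflTransGen.refl, by omega, h2⟩

end VCISAux

/-- Non-crossing property of the v-CIS decomposition of a 132-avoiding permutation:
there are no positions `i < j < k < l` with `i, k` in one maximal value-consecutive
increasing subsequence and `j, l` in a different one. -/
theorem stmt4 (n : ℕ) (π : Equiv.Perm (Fin n)) (h : Avoids132 π) :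
    ¬ ∃ i j k l : ℕ, i < j ∧ j < k ∧ k < l ∧ l < n ∧
      SameVCIS π i k ∧ SameVCIS π j l ∧ ¬ SameVCIS π i j := by
  open VCISAux in
  rintro ⟨i, j, k, l, hij, hjk, hkl, hln, hik, hjl, hnij⟩
  have hik' : Relation.ReflTransGen (R π) i k := sameVCIS_of_lt hik (by omega)
  have hjl' : Relation.ReflTransGen (R π) j l := sameVCIS_of_lt hjl (by omega)
  obtain ⟨a, b, hia, hab, hbk, haj, hjb⟩ := straddle hik' hij (le_of_lt hjk)
  -- if j = b then i ~ j
  rcases eq_or_lt_of_le hjb with rfl | hjb'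
  · exact hnij (Relation.EqvGen.trans _ _ _ (rtg_eqvGen hia) (Relation.EqvGen.rel _ _ hab))
  have hbn : b < n := hab.2.1
  have han : a < n := lt_trans hab.1 hbn
  have hjn : j < n := by omega
  have hkn : k < n := by omega
  have hja : permVal π j ≠ permVal π a := fun he => by
    have := permVal_inj hjn han he; omega
  have hjb2 : permVal π j ≠ permVal π b := fun he => by
    have := permVal_inj hjn hbn he; omega
  rcases lt_or_gt_of_ne hja with hcase | hcase
  · -- π j < π a : look at the j-chain straddling k
    obtain ⟨c, d, hjc, hcd, hdl, hck, hkd⟩ := straddle hjl' hjk (le_of_lt hkl)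
    rcases eq_or_lt_of_le hkd with rfl | hkd'
    · -- k on j's chain, so i ~ j
      refine hnij (Relation.EqvGen.trans _ _ _ hik ?_)
      exact Relation.EqvGen.symm _ _
        (Relation.EqvGen.trans _ _ _ (rtg_eqvGen hjc) (Relation.EqvGen.rel _ _ hcd))
    have hdn : d < n := hcd.2.1
    have hcn : c < n := lt_trans hcd.1 hdn
    have hkc : permVal π k ≠ permVal π c := fun he => by
      have := permVal_inj hkn hcn he; omega
    have hkd2 : permVal π k ≠ permVal π d := fun he => by
      have := permVal_inj hkn hdn he; omega
    have hbkval : permVal π b ≤ permVal π k := rtg_val_le' hbk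
    have habval : permVal π b = permVal π a + 1 := hab.2.2
    have hjkval : permVal π j < permVal π k := by omega
    rcases lt_or_gt_of_ne hkc with hcase2 | hcase2
    · -- π k < π c : pattern (j, c, k)
      have hjcpos : j < c := by
        rcases eq_or_lt_of_le (rtg_le hjc) with rfl | h'
        · omega
        · exact h'
      exact h ⟨j, c, k, hjcpos, hck, hkn, hjkval, hcase2⟩
    · -- π c < π k : then π d < π k : pattern (c, k, d)
      have hcdval : permVal π d = permVal π c + 1 := hcd.2.2
      exact h ⟨c, k, d, hck, hkd', hdn, by omega, by omega⟩
  · -- π a < π j : then π b < π j : pattern (a, j, b)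
    have habval : permVal π b = permVal π a + 1 := hab.2.2
    exact h ⟨a, j, b, haj, hjb', hbn, by omega, by omega⟩
end

section
/- Let π be a 132-avoiding permutation of [n] and let τ and τ′ be two distinct maximal value-consecutive increasing subsequences (v-CIS) of π. If every position of τ lies strictly between two consecutive positions of τ′, then the maximum value in τ is smaller than the minimum value in τ′. If every position of τ lies strictly before the first position of τ′, then the maximum value in τ′ is smaller than the minimum value in τ. -/
open Classical

namespace Stmt5Aux

/-- The one-step relation generating `SameVCIS`. -/
def Rrel {n : ℕ} (π : Equiv.Perm (Fin n)) (a b : ℕ) : Prop :=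
  a < b ∧ b < n ∧ permVal π b = permVal π a + 1

lemma sameVCIS_iff {n : ℕ} (π : Equiv.Perm (Fin n)) (p q : ℕ) :
    SameVCIS π p q ↔ Relation.EqvGen (Rrel π) p q := Iff.rfl

lemma permVal_lt {n : ℕ} (π : Equiv.Perm (Fin n)) {t : ℕ} (ht : t < n) :
    permVal π t < n := by
  simp only [permVal, dif_pos ht]
  exact (π ⟨t, ht⟩).isLt

lemma permVal_inj {n : ℕ} (π : Equiv.Perm (Fin n)) {a b : ℕ} (ha : a < n) (hb : b < n)
    (h : permVal π a = permVal π b) : a = b := by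
  simp only [permVal, dif_pos ha, dif_pos hb] at h
  have h2 : π ⟨a, ha⟩ = π ⟨b, hb⟩ := Fin.ext h
  have h3 := π.injective h2
  exact congrArg Fin.val h3

lemma rt_comp {α : Type*} {R : α → α → Prop}
    (hdet : ∀ a b c, R a b → R a c → b = c) :
    ∀ {a b c}, Relation.ReflTransGen R a b → Relation.ReflTransGen R a c →
      Relation.ReflTransGen R b c ∨ Relation.ReflTransGen R c b := by
  intro a b c hab
  induction hab using Relation.ReflTransGen.head_induction_on with
  | refl => intro hac; exact Or.inl hac
  | head hxy hyb ih =>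
      intro hac
      rcases hac.cases_head with rfl | ⟨c', hxc', hc'c⟩
      · exact Or.inr (hyb.head hxy)
      · exact ih (by rwa [← hdet _ _ _ hxy hxc'] at hc'c)

lemma rt_comp' {α : Type*} {R : α → α → Prop}
    (hcodet : ∀ a b c, R a c → R b c → a = b) :
    ∀ {a b c}, Relation.ReflTransGen R a c → Relation.ReflTransGen R b c →
      Relation.ReflTransGen R a b ∨ Relation.ReflTransGen R b a := by
  intro a b c h1 h2
  have h1' : Relation.ReflTransGen (Function.swap R) c a :=
    Relation.reflTransGen_swap.mpr h1
  have h2' : Relation.ReflTransGen (Function.swap R) c b :=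
    Relation.reflTransGen_swap.mpr h2
  have := rt_comp (R := Function.swap R) (fun a b c h h' => hcodet b c a h h') h1' h2'
  rcases this with h | h
  · exact Or.inr (Relation.reflTransGen_swap.mp h)
  · exact Or.inl (Relation.reflTransGen_swap.mp h)

lemma Rrel_det {n : ℕ} (π : Equiv.Perm (Fin n)) :
    ∀ a b c, Rrel π a b → Rrel π a c → b = c := by
  intro a b c h1 h2
  exact permVal_inj π h1.2.1 h2.2.1 (h1.2.2.trans h2.2.2.symm)

lemma Rrel_codet {n : ℕ} (π : Equiv.Perm (Fin n)) :
    ∀ a b c, Rrel π a c → Rrel π b c → a = b := by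
  intro a b c h1 h2
  have ha : a < n := lt_trans h1.1 h1.2.1
  have hb : b < n := lt_trans h2.1 h2.2.1
  have : permVal π a + 1 = permVal π b + 1 := h1.2.2.symm.trans h2.2.2
  exact permVal_inj π ha hb (Nat.succ_injective this)

/-- Path structure lemma: the equivalence class is a path. -/
lemma psl {n : ℕ} (π : Equiv.Perm (Fin n)) {p q : ℕ} (h : SameVCIS π p q) :
    Relation.ReflTransGen (Rrel π) p q ∨ Relation.ReflTransGen (Rrel π) q p := by
  rw [sameVCIS_iff] at h
  induction h with
  | rel a b hab => exact Or.inl (Relation.ReflTransGen.single hab)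
  | refl x => exact Or.inl Relation.ReflTransGen.refl
  | symm x y _ ih => exact ih.symm
  | trans x y z _ _ ih1 ih2 =>
      rcases ih1 with h1 | h1 <;> rcases ih2 with h2 | h2
      · exact Or.inl (h1.trans h2)
      · exact rt_comp' (Rrel_codet π) h1 h2
      · exact rt_comp (Rrel_det π) h1 h2
      · exact Or.inr (h2.trans h1)

lemma chain_mono {n : ℕ} (π : Equiv.Perm (Fin n)) {a b : ℕ}
    (h : Relation.ReflTransGen (Rrel π) a b) : a ≤ b ∧ permVal π a ≤ permVal π b := by
  induction h with
  | refl => exact ⟨le_refl _, le_refl _⟩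
  | tail _ h2 ih =>
      refine ⟨ih.1.trans (le_of_lt h2.1), ?_⟩
      have := h2.2.2
      omega

lemma sv_lt {n : ℕ} (π : Equiv.Perm (Fin n)) {p q : ℕ} (h : SameVCIS π p q)
    (hp : p < n) : q < n := by
  rw [sameVCIS_iff] at h
  suffices H : p < n ↔ q < n from H.mp hp
  clear hp
  induction h with
    | rel a b hab => exact ⟨fun _ => hab.2.1, fun _ => lt_trans hab.1 hab.2.1⟩
    | refl x => exact Iff.rfl
    | symm x y _ ih => exact ih.symm
    | trans x y z _ _ ih1 ih2 => exact ih1.trans ih2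

lemma claim1 {n : ℕ} (π : Equiv.Perm (Fin n)) (h : Avoids132 π) {p p' : ℕ}
    (hp : p < n) (hp' : p' < n)
    (hyp : ∃ a b : ℕ, SameVCIS π p' a ∧ SameVCIS π p' b ∧ a < b ∧
        (∀ q, SameVCIS π p q → a < q ∧ q < b) ∧
        (∀ c, SameVCIS π p' c → ¬ (a < c ∧ c < b))) :
    ∀ q r, SameVCIS π p q → SameVCIS π p' r → permVal π q < permVal π r := by
  obtain ⟨a, b, haC, hbC, hab, hbetween, hnoc⟩ := hyp
  have han : a < n := sv_lt π haC hp'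
  have hbn : b < n := sv_lt π hbC hp'
  -- Step 1 : a and b are linked by a single step, so permVal π b = permVal π a + 1
  have hSab : SameVCIS π a b :=
    Relation.EqvGen.trans _ _ _ (Relation.EqvGen.symm _ _ haC) hbC
  have h1 : Rrel π a b := by
    rcases psl π hSab with h' | h'
    · rcases h'.cases_head with rfl | ⟨c, hac, hcb⟩
      · exact absurd hab (lt_irrefl _)
      · have hcb' : c ≤ b := (chain_mono π hcb).1
        rcases eq_or_lt_of_le hcb' with rfl | hlt
        · exact hac
        · have hcC : SameVCIS π p' c :=
            Relation.EqvGen.trans _ _ _ haC (Relation.EqvGen.rel _ _ hac)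
          exact absurd ⟨hac.1, hlt⟩ (hnoc c hcC)
    · exact absurd (chain_mono π h').1 (not_le.mpr hab)
  have hba1 : permVal π b = permVal π a + 1 := h1.2.2
  -- Step 2 : every value of τ is below permVal π a
  have hqa : ∀ q, SameVCIS π p q → permVal π q < permVal π a := by
    intro q hqC
    obtain ⟨haq, hqb⟩ := hbetween q hqC
    have hqn : q < n := sv_lt π hqC hp
    by_contra hge
    have hnea : permVal π q ≠ permVal π a := fun e => by
      have := permVal_inj π hqn han e; omega
    have hneb : permVal π q ≠ permVal π b := fun e => by
      have := permVal_inj π hqn hbn e; omega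
    exact h ⟨a, q, b, haq, hqb, hbn, by omega, by omega⟩
  -- Step 3 : conclusion
  intro q r hqC hrC
  have hq := hqa q hqC
  have hrn : r < n := sv_lt π hrC hp'
  have hqn : q < n := sv_lt π hqC hp
  obtain ⟨haq, hqb⟩ := hbetween q hqC
  rcases le_or_gt (permVal π a) (permVal π r) with hle | hlt
  · omega
  · -- permVal π r < permVal π a, so r is before a in τ'
    have hSra : SameVCIS π r a :=
      Relation.EqvGen.trans _ _ _ (Relation.EqvGen.symm _ _ hrC) haC
    have hra : r < a := by
      rcases psl π hSra with h' | h'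
      · have h2 := (chain_mono π h').1
        have hne : r ≠ a := fun e => by rw [e] at hlt; omega
        omega
      · have h2 := (chain_mono π h').2
        omega
    by_contra hge
    have hne : permVal π r ≠ permVal π q := fun e => by
      have := permVal_inj π hrn hqn e; omega
    exact h ⟨r, a, q, hra, haq, hqn, by omega, by omega⟩

lemma claim2 {n : ℕ} (π : Equiv.Perm (Fin n)) (h : Avoids132 π) {p p' : ℕ}
    (hp : p < n) (hp' : p' < n)
    (hord : ∀ q r, SameVCIS π p q → SameVCIS π p' r → q < r) :
    ∀ q r, SameVCIS π p q → SameVCIS π p' r → permVal π r < permVal π q := by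
  suffices H : ∀ v q r, SameVCIS π p q → SameVCIS π p' r → permVal π r = v →
      permVal π r < permVal π q by
    intro q r hq hr; exact H (permVal π r) q r hq hr rfl
  intro v
  induction v using Nat.strong_induction_on with
  | _ v ih =>
    intro q r hqC hrC hv
    by_contra hge
    have hqr : q < r := hord q r hqC hrC
    have hqn : q < n := sv_lt π hqC hp
    have hrn : r < n := sv_lt π hrC hp'
    have hne : permVal π q ≠ permVal π r := fun e => by
      have := permVal_inj π hqn hrn e; omega
    have hlt : permVal π q < permVal π r := by omega
    have hr1 : 1 ≤ permVal π r := by omega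
    have hd : permVal π r - 1 < n := lt_trans (by omega) (permVal_lt π hrn)
    set c : ℕ := ((π.symm ⟨permVal π r - 1, hd⟩ : Fin n) : ℕ) with hc_def
    have hcn : c < n := (π.symm ⟨permVal π r - 1, hd⟩).isLt
    have hcd : permVal π c = permVal π r - 1 := by
      have hA : permVal π c = ((π ⟨c, hcn⟩ : Fin n) : ℕ) := by
        unfold permVal; rw [dif_pos hcn]
      have hB : (⟨c, hcn⟩ : Fin n) = π.symm ⟨permVal π r - 1, hd⟩ := rfl
      rw [hA, hB, Equiv.apply_symm_apply]
    have hcr : c ≠ r := fun e => by rw [e] at hcd; omega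
    rcases lt_or_gt_of_ne hcr with h1 | h1
    · -- c < r : c belongs to τ', apply the induction hypothesis
      have hR : Rrel π c r := ⟨h1, hrn, by omega⟩
      have hcC' : SameVCIS π p' c :=
        Relation.EqvGen.trans _ _ _ hrC (Relation.EqvGen.symm _ _ (Relation.EqvGen.rel _ _ hR))
      have := ih (permVal π r - 1) (by omega) q c hqC hcC' hcd
      omega
    · -- r < c : 132 pattern at (q, r, c)
      have hqd : permVal π q < permVal π r - 1 := by
        have hle : permVal π q ≤ permVal π r - 1 := by omega
        rcases lt_or_eq_of_le hle with h' | h'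
        · exact h'
        · exfalso
          have : q = c := permVal_inj π hqn hcn (by omega)
          omega
      exact h ⟨q, r, c, hqr, h1, hcn, by omega, by omega⟩

end Stmt5Aux

/-- Let `τ` (the v-CIS of position `p`) and `τ'` (the v-CIS of position `p'`) be two
distinct maximal value-consecutive increasing subsequences of a 132-avoiding permutation.
If every position of `τ` lies strictly between two consecutive positions of `τ'`, then
every value of `τ` is smaller than every value of `τ'`; if every position of `τ` lies
strictly before every position of `τ'`, then every value of `τ'` is smaller than every
value of `τ`. -/
theorem stmt5 (n : ℕ) (π : Equiv.Perm (Fin n)) (h : Avoids132 π) (p p' : ℕ)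
    (hp : p < n) (hp' : p' < n) (hdist : ¬ SameVCIS π p p') :
    ((∃ a b : ℕ, SameVCIS π p' a ∧ SameVCIS π p' b ∧ a < b ∧
        (∀ q, SameVCIS π p q → a < q ∧ q < b) ∧
        (∀ c, SameVCIS π p' c → ¬ (a < c ∧ c < b))) →
      ∀ q r, SameVCIS π p q → SameVCIS π p' r → permVal π q < permVal π r)
    ∧ ((∀ q r, SameVCIS π p q → SameVCIS π p' r → q < r) →
      ∀ q r, SameVCIS π p q → SameVCIS π p' r → permVal π r < permVal π q) := by
  exact ⟨fun hyp => Stmt5Aux.claim1 π h hp hp' hyp,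
         fun hord => Stmt5Aux.claim2 π h hp hp' hord⟩
end

section
/- For 1 ≤ i < j ≤ n, a 132-avoiding permutation of [n] starting with value i and ending with value j must satisfy j = n; moreover, the number of 132-avoiding permutations on [n] with π₁ = i, πₙ = n, and exactly k descents equals the number of 132-avoiding permutations on [n−1] with first entry i and exactly k descents. -/
open Classical

/-- The number of descents of `π`, with the last position always counted as a descent. -/
def descentCount {n : ℕ} (π : Equiv.Perm (Fin n)) : ℕ :=
  ((Finset.range n).filter
      (fun i => i + 1 = n ∨ permVal π (i + 1) < permVal π i)).card

namespace Stmt9Aux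

lemma permVal_lt {m : ℕ} (σ : Equiv.Perm (Fin (m+1))) (t : ℕ) :
    permVal σ t ≤ m := by
  unfold permVal
  split
  · exact Nat.lt_succ_iff.mp (σ _).isLt
  · exact Nat.zero_le _

/-- Extend a permutation of `Fin m` to `Fin (m+1)` fixing the last element. -/
def extPerm {m : ℕ} (σ : Equiv.Perm (Fin m)) : Equiv.Perm (Fin (m+1)) :=
  (finSuccEquivLast.symm).permCongr σ.optionCongr

lemma extPerm_castSucc {m : ℕ} (σ : Equiv.Perm (Fin m)) (x : Fin m) :
    extPerm σ (Fin.castSucc x) = Fin.castSucc (σ x) := by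
  simp [extPerm, Equiv.permCongr_apply]

lemma extPerm_last {m : ℕ} (σ : Equiv.Perm (Fin m)) :
    extPerm σ (Fin.last m) = Fin.last m := by
  simp [extPerm, Equiv.permCongr_apply]

lemma extPerm_injective {m : ℕ} : Function.Injective (extPerm (m := m)) := by
  intro σ τ h
  ext x
  have := congrArg (fun p : Equiv.Perm (Fin (m+1)) => p (Fin.castSucc x)) h
  simp only [extPerm_castSucc] at this
  exact congrArg Fin.val (Fin.castSucc_injective _ this)

/-- Restrict a permutation of `Fin (m+1)` fixing the last element to `Fin m`. -/
def resPerm {m : ℕ} (π : Equiv.Perm (Fin (m+1))) (h : π (Fin.last m) = Fin.last m) :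
    Equiv.Perm (Fin m) where
  toFun x := (π x.castSucc).castPred (by
    intro hc
    exact (Fin.castSucc_lt_last x).ne (π.injective (hc.trans h.symm)))
  invFun x := (π.symm x.castSucc).castPred (by
    intro hc
    have : π (Fin.last m) = x.castSucc := by
      rw [← hc]; simp
    exact (Fin.castSucc_lt_last x).ne ((h.symm.trans this).symm))
  left_inv x := by
    simp only [Fin.castSucc_castPred]
    simp
  right_inv x := by
    simp only [Fin.castSucc_castPred]
    simp

lemma extPerm_resPerm {m : ℕ} (π : Equiv.Perm (Fin (m+1)))
    (h : π (Fin.last m) = Fin.last m) : extPerm (resPerm π h) = π := by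
  ext x
  refine Fin.lastCases ?_ ?_ x
  · rw [extPerm_last, h]
  · intro y
    rw [extPerm_castSucc]
    exact congrArg Fin.val (Fin.castSucc_castPred (π y.castSucc)
      (fun hc => (Fin.castSucc_lt_last y).ne (π.injective (hc.trans h.symm))))

lemma permVal_extPerm {m : ℕ} (σ : Equiv.Perm (Fin m)) (t : ℕ) (ht : t < m) :
    permVal (extPerm σ) t = permVal σ t := by
  unfold permVal
  rw [dif_pos (Nat.lt_succ_of_lt ht), dif_pos ht]
  have : (⟨t, Nat.lt_succ_of_lt ht⟩ : Fin (m+1)) = Fin.castSucc ⟨t, ht⟩ := rfl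
  rw [this, extPerm_castSucc]
  simp

lemma permVal_extPerm_last {m : ℕ} (σ : Equiv.Perm (Fin m)) :
    permVal (extPerm σ) m = m := by
  unfold permVal
  rw [dif_pos (Nat.lt_succ_self m)]
  have : (⟨m, Nat.lt_succ_self m⟩ : Fin (m+1)) = Fin.last m := rfl
  rw [this, extPerm_last]
  simp

lemma avoids_extPerm {m : ℕ} (σ : Equiv.Perm (Fin m)) :
    Avoids132 (extPerm σ) ↔ Avoids132 σ := by
  unfold Avoids132
  constructor
  · intro h hc
    obtain ⟨a, b, c, hab, hbc, hcm, h1, h2⟩ := hc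
    have ea := permVal_extPerm σ a (lt_trans (lt_trans hab hbc) hcm)
    have eb := permVal_extPerm σ b (lt_trans hbc hcm)
    have ec := permVal_extPerm σ c hcm
    exact h ⟨a, b, c, hab, hbc, Nat.lt_succ_of_lt hcm,
      by rw [ea, ec]; exact h1, by rw [ec, eb]; exact h2⟩
  · intro h hc
    obtain ⟨a, b, c, hab, hbc, hcm, h1, h2⟩ := hc
    rcases Nat.lt_succ_iff_lt_or_eq.mp hcm with hlt | heq
    · have ea := permVal_extPerm σ a (lt_trans (lt_trans hab hbc) hlt)
      have eb := permVal_extPerm σ b (lt_trans hbc hlt)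
      have ec := permVal_extPerm σ c hlt
      exact h ⟨a, b, c, hab, hbc, hlt,
        by rw [ea, ec] at h1; exact h1, by rw [ec, eb] at h2; exact h2⟩
    · subst heq
      rw [permVal_extPerm_last] at h2
      exact absurd h2 (not_lt.mpr (permVal_lt _ _))

lemma descent_extPerm {l : ℕ} (σ : Equiv.Perm (Fin (l+1))) :
    descentCount (extPerm σ) = descentCount σ := by
  unfold descentCount
  have hrange2 : Finset.range (l+2) = insert (l+1) (Finset.range (l+1)) :=
    Finset.range_add_one
  have hrange1 : Finset.range (l+1) = insert l (Finset.range l) :=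
    Finset.range_add_one
  set P : ℕ → Prop := fun i => i + 1 = l+2 ∨ permVal (extPerm σ) (i+1) < permVal (extPerm σ) i with hP
  set Q : ℕ → Prop := fun i => i + 1 = l+1 ∨ permVal σ (i+1) < permVal σ i with hQ
  have hPl1 : P (l+1) := Or.inl rfl
  have hQl : Q l := Or.inl rfl
  have hPl : ¬ P l := by
    rintro (h | h)
    · omega
    · rw [permVal_extPerm_last, permVal_extPerm _ _ (Nat.lt_succ_self l)] at h
      have := permVal_lt σ l
      omega
  have hfilter_eq : (Finset.range l).filter P = (Finset.range l).filter Q := by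
    apply Finset.filter_congr
    intro x hx
    simp only [Finset.mem_range] at hx
    have h1 : permVal (extPerm σ) (x+1) = permVal σ (x+1) :=
      permVal_extPerm _ _ (by omega)
    have h2 : permVal (extPerm σ) x = permVal σ x :=
      permVal_extPerm _ _ (by omega)
    simp only [hP, hQ, h1, h2]
    constructor
    · rintro (h | h)
      · omega
      · exact Or.inr h
    · rintro (h | h)
      · omega
      · exact Or.inr h
  calc ((Finset.range (l+2)).filter P).card
      = (insert (l+1) ((Finset.range (l+1)).filter P)).card := by
        rw [hrange2, Finset.filter_insert, if_pos hPl1]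
    _ = ((Finset.range (l+1)).filter P).card + 1 := by
        rw [Finset.card_insert_of_notMem]
        intro hmem
        have := Finset.mem_of_mem_filter _ hmem
        simp at this
    _ = ((Finset.range l).filter P).card + 1 := by
        rw [hrange1, Finset.filter_insert, if_neg hPl]
    _ = ((Finset.range l).filter Q).card + 1 := by rw [hfilter_eq]
    _ = (insert l ((Finset.range l).filter Q)).card := by
        rw [Finset.card_insert_of_notMem]
        intro hmem
        have := Finset.mem_of_mem_filter _ hmem
        simp at this
    _ = ((Finset.range (l+1)).filter Q).card := by
        rw [hrange1, Finset.filter_insert, if_pos hQl]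

end Stmt9Aux

open Stmt9Aux in
/-- For `1 ≤ i < j ≤ n`: a 132-avoiding permutation of `[n]` starting with value `i` and
ending with value `j` must have `j = n`; moreover the 132-avoiding permutations of `[n]`
starting with `i`, ending with `n`, and having `k` descents are equinumerous with the
132-avoiding permutations of `[n-1]` starting with `i` and having `k` descents. -/
theorem stmt9 (n i j k : ℕ) (h1 : 1 ≤ i) (hij : i < j) (hjn : j ≤ n) :
    (∀ π : Equiv.Perm (Fin n), Avoids132 π → permVal π 0 = i - 1 →
        permVal π (n - 1) = j - 1 → j = n)
    ∧ Nat.card {π : Equiv.Perm (Fin n) //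
        Avoids132 π ∧ permVal π 0 = i - 1 ∧ permVal π (n - 1) = n - 1 ∧
          descentCount π = k} =
      Nat.card {σ : Equiv.Perm (Fin (n - 1)) //
        Avoids132 σ ∧ permVal σ 0 = i - 1 ∧ descentCount σ = k} := by
  obtain ⟨l, rfl⟩ : ∃ l, n = l + 2 := ⟨n - 2, by omega⟩
  have hn1 : l + 2 - 1 = l + 1 := rfl
  constructor
  · -- first part
    intro π hA h0 hl
    by_contra hj
    have hjl : j - 1 < l + 1 := by omega
    rw [hn1] at hl
    set b := π.symm (Fin.last (l+1)) with hb
    have hπb : π b = Fin.last (l+1) := π.apply_symm_apply _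
    have hb0 : b.val ≠ 0 := by
      intro hc
      have : π ⟨0, by omega⟩ = Fin.last (l+1) := by
        rw [← hπb]; congr 1; exact Fin.ext hc.symm
      have : permVal π 0 = l + 1 := by
        unfold permVal; rw [dif_pos (by omega : 0 < l + 2)]
        rw [this]; rfl
      omega
    have hbl : b.val ≠ l + 1 := by
      intro hc
      have : π ⟨l+1, by omega⟩ = Fin.last (l+1) := by
        rw [← hπb]; congr 1; exact Fin.ext hc.symm
      have : permVal π (l+1) = l + 1 := by
        unfold permVal; rw [dif_pos (by omega : l+1 < l + 2)]
        rw [this]; rfl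
      omega
    have hbval : permVal π b.val = l + 1 := by
      unfold permVal; rw [dif_pos b.isLt]
      have : (⟨b.val, b.isLt⟩ : Fin (l+2)) = b := rfl
      rw [this, hπb]; rfl
    exact hA ⟨0, b.val, l+1, by omega, by omega, by omega,
      by rw [h0, hl]; omega, by rw [hl, hbval]; omega⟩
  · -- second part
    rw [hn1]
    refine (Nat.card_eq_of_bijective
      (fun σ : {σ : Equiv.Perm (Fin (l+1)) //
          Avoids132 σ ∧ permVal σ 0 = i - 1 ∧ descentCount σ = k} =>
        (⟨extPerm σ.val, ?_, ?_, ?_, ?_⟩ :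
          {π : Equiv.Perm (Fin (l+2)) //
            Avoids132 π ∧ permVal π 0 = i - 1 ∧ permVal π (l+1) = l+1 ∧
              descentCount π = k})) ⟨?_, ?_⟩).symm
    · exact (avoids_extPerm _).mpr σ.prop.1
    · rw [permVal_extPerm _ _ (by omega)]; exact σ.prop.2.1
    · exact permVal_extPerm_last _
    · rw [descent_extPerm]; exact σ.prop.2.2
    · -- injective
      intro σ τ h
      apply Subtype.ext
      exact extPerm_injective (congrArg Subtype.val h)
    · -- surjective
      rintro ⟨π, hA, h0, hlast, hd⟩
      have hfix : π (Fin.last (l+1)) = Fin.last (l+1) := by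
        unfold permVal at hlast
        rw [dif_pos (by omega : l+1 < l+2)] at hlast
        exact Fin.ext hlast
      have hext := extPerm_resPerm π hfix
      refine ⟨⟨resPerm π hfix, ?_, ?_, ?_⟩, ?_⟩
      · rw [← avoids_extPerm, hext]; exact hA
      · rw [← permVal_extPerm _ _ (by omega : 0 < l+1), hext]; exact h0
      · rw [← descent_extPerm, hext]; exact hd
      · apply Subtype.ext
        exact hext
end

section
/- The number of 132-avoiding permutations of [n] equals the n-th Catalan number C_n = C(2n, n)/(n+1). -/
open Classical

namespace Stmt14

lemma permVal_lt {n : ℕ} (π : Equiv.Perm (Fin n)) {t : ℕ} (h : t < n) :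
    permVal π t < n := by
  simp only [permVal, dif_pos h]
  exact (π ⟨t, h⟩).2

lemma permVal_eq {n : ℕ} (π : Equiv.Perm (Fin n)) {t : ℕ} (h : t < n) :
    permVal π t = (π ⟨t, h⟩ : ℕ) := by
  simp [permVal, h]

lemma permVal_inj {n : ℕ} (π : Equiv.Perm (Fin n)) {s t : ℕ} (hs : s < n) (ht : t < n)
    (h : permVal π s = permVal π t) : s = t := by
  rw [permVal_eq π hs, permVal_eq π ht] at h
  have h2 := π.injective (Fin.ext h)
  exact congrArg Fin.val h2

lemma permVal_symm_permVal {n : ℕ} (π : Equiv.Perm (Fin n)) {t : ℕ} (h : t < n) :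
    permVal π.symm (permVal π t) = t := by
  rw [permVal_eq π h, permVal_eq π.symm (π ⟨t, h⟩).2]
  have : (⟨((π ⟨t, h⟩ : Fin n) : ℕ), (π ⟨t, h⟩).2⟩ : Fin n) = π ⟨t, h⟩ := rfl
  rw [this, Equiv.symm_apply_apply]

lemma permVal_permVal_symm {n : ℕ} (π : Equiv.Perm (Fin n)) {v : ℕ} (h : v < n) :
    permVal π (permVal π.symm v) = v := permVal_symm_permVal π.symm h

/-- ℕ-level forward map of the assembled permutation. -/
def fwd (n i : ℕ) (s t : ℕ → ℕ) (x : ℕ) : ℕ :=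
  if x < i then s x + (n - i) else if x = i then n else t (x - i - 1)

/-- ℕ-level inverse map of the assembled permutation. -/
def bwd (n i : ℕ) (s' t' : ℕ → ℕ) (v : ℕ) : ℕ :=
  if v < n - i then i + 1 + t' v else if v = n then i else s' (v - (n - i))

lemma fwd_of_lt {n i : ℕ} {s t : ℕ → ℕ} {x : ℕ} (h : x < i) :
    fwd n i s t x = s x + (n - i) := if_pos h

lemma fwd_of_eq {n i : ℕ} {s t : ℕ → ℕ} : fwd n i s t i = n := by
  unfold fwd; rw [if_neg (lt_irrefl _), if_pos rfl]

lemma fwd_of_gt {n i : ℕ} {s t : ℕ → ℕ} {x : ℕ} (h : i < x) :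
    fwd n i s t x = t (x - i - 1) := by
  unfold fwd; rw [if_neg (by omega), if_neg (by omega)]

variable {n : ℕ}

section asm

variable (i : ℕ) (hi : i ≤ n) (σ : Equiv.Perm (Fin i)) (τ : Equiv.Perm (Fin (n - i)))

include hi

lemma fwd_lt {x : ℕ} (hx : x < n + 1) :
    fwd n i (permVal σ) (permVal τ) x < n + 1 := by
  rcases lt_trichotomy x i with h | h | h
  · rw [fwd_of_lt h]; have := permVal_lt σ h; omega
  · subst h; rw [fwd_of_eq]; omega
  · rw [fwd_of_gt h]
    have := permVal_lt τ (show x - i - 1 < n - i by omega); omega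

lemma bwd_lt {v : ℕ} (hv : v < n + 1) :
    bwd n i (permVal σ.symm) (permVal τ.symm) v < n + 1 := by
  unfold bwd
  split_ifs with h1 h2
  · have := permVal_lt τ.symm h1; omega
  · omega
  · have : v - (n - i) < i := by omega
    have := permVal_lt σ.symm this; omega

lemma bwd_fwd {x : ℕ} (hx : x < n + 1) :
    bwd n i (permVal σ.symm) (permVal τ.symm) (fwd n i (permVal σ) (permVal τ) x) = x := by
  rcases lt_trichotomy x i with h | h | h
  · rw [fwd_of_lt h]
    have hs := permVal_lt σ h
    unfold bwd
    rw [if_neg (by omega), if_neg (by omega)]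
    have h3 : permVal σ x + (n - i) - (n - i) = permVal σ x := by omega
    rw [h3, permVal_symm_permVal σ h]
  · subst h; rw [fwd_of_eq]
    unfold bwd
    rw [if_neg (by omega), if_pos rfl]
  · rw [fwd_of_gt h]
    have harg : x - i - 1 < n - i := by omega
    have ht := permVal_lt τ harg
    unfold bwd
    rw [if_pos ht, permVal_symm_permVal τ harg]
    omega

lemma fwd_bwd {v : ℕ} (hv : v < n + 1) :
    fwd n i (permVal σ) (permVal τ) (bwd n i (permVal σ.symm) (permVal τ.symm) v) = v := by
  unfold bwd
  split_ifs with h1 h2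
  · have ht := permVal_lt τ.symm h1
    rw [fwd_of_gt (show i < i + 1 + permVal τ.symm v by omega)]
    have h3 : i + 1 + permVal τ.symm v - i - 1 = permVal τ.symm v := by omega
    rw [h3, permVal_permVal_symm τ h1]
  · rw [fwd_of_eq]; omega
  · have harg : v - (n - i) < i := by omega
    have hs := permVal_lt σ.symm harg
    rw [fwd_of_lt hs, permVal_permVal_symm σ harg]
    omega

/-- Assembled permutation. -/
def asm : Equiv.Perm (Fin (n + 1)) where
  toFun x := ⟨fwd n i (permVal σ) (permVal τ) x, fwd_lt i hi σ τ x.2⟩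
  invFun v := ⟨bwd n i (permVal σ.symm) (permVal τ.symm) v, bwd_lt i hi σ τ v.2⟩
  left_inv x := Fin.ext (bwd_fwd i hi σ τ x.2)
  right_inv v := Fin.ext (fwd_bwd i hi σ τ v.2)

lemma permVal_asm {x : ℕ} (hx : x < n + 1) :
    permVal (asm i hi σ τ) x = fwd n i (permVal σ) (permVal τ) x := by
  rw [permVal_eq _ hx]; rfl

lemma asm_avoids (hσ : Avoids132 σ) (hτ : Avoids132 τ) : Avoids132 (asm i hi σ τ) := by
  rintro ⟨a, b, c, hab, hbc, hcn, h1, h2⟩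
  rw [permVal_asm i hi σ τ (by omega), permVal_asm i hi σ τ hcn] at h1
  rw [permVal_asm i hi σ τ hcn, permVal_asm i hi σ τ (by omega)] at h2
  rcases lt_trichotomy c i with hc | hc | hc
  · -- all three below i : pattern in σ
    rw [fwd_of_lt (by omega : a < i), fwd_of_lt hc] at h1
    rw [fwd_of_lt hc, fwd_of_lt (by omega : b < i)] at h2
    exact hσ ⟨a, b, c, hab, hbc, hc, by omega, by omega⟩
  · -- c = i : value n is maximal
    subst hc
    rw [fwd_of_eq] at h2
    rcases lt_trichotomy b c with hb | hb | hb
    · rw [fwd_of_lt hb] at h2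
      have := permVal_lt σ hb; omega
    · omega
    · rw [fwd_of_gt hb] at h2
      have := permVal_lt τ (show b - c - 1 < n - c by omega); omega
  · -- c > i
    rw [fwd_of_gt hc] at h1 h2
    have hcv : permVal τ (c - i - 1) < n - i := permVal_lt τ (by omega)
    rcases lt_trichotomy a i with ha | ha | ha
    · rw [fwd_of_lt ha] at h1; omega
    · subst ha; rw [fwd_of_eq] at h1; omega
    · rw [fwd_of_gt ha] at h1
      have hb : i < b := by omega
      rw [fwd_of_gt hb] at h2
      exact hτ ⟨a - i - 1, b - i - 1, c - i - 1, by omega, by omega, by omega, h1, h2⟩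

end asm

/-- The sigma type encoding the decomposition. -/
def Obj (n : ℕ) : Type :=
  Σ i : Fin (n + 1), {σ : Equiv.Perm (Fin i) // Avoids132 σ} ×
    {τ : Equiv.Perm (Fin (n - i)) // Avoids132 τ}

noncomputable def g (n : ℕ) : Obj n → {π : Equiv.Perm (Fin (n + 1)) // Avoids132 π} :=
  fun ⟨i, ⟨σ, hσ⟩, ⟨τ, hτ⟩⟩ =>
    ⟨asm i i.is_le σ τ, asm_avoids i i.is_le σ τ hσ hτ⟩

lemma g_injective (n : ℕ) : Function.Injective (g n) := by
  rintro ⟨i, ⟨σ, hσ⟩, ⟨τ, hτ⟩⟩ ⟨j, ⟨σ', hσ'⟩, ⟨τ', hτ'⟩⟩ h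
  have hA : asm (i : ℕ) i.is_le σ τ = asm (j : ℕ) j.is_le σ' τ' := congrArg Subtype.val h
  have hval : ∀ x : ℕ, x < n + 1 →
      fwd n i (permVal σ) (permVal τ) x = fwd n j (permVal σ') (permVal τ') x := by
    intro x hx
    rw [← permVal_asm (i : ℕ) i.is_le σ τ hx, ← permVal_asm (j : ℕ) j.is_le σ' τ' hx, hA]
  have hij : (i : ℕ) = (j : ℕ) := by
    by_contra hne
    have hv := hval i i.2
    rw [fwd_of_eq] at hv
    rcases lt_or_gt_of_ne hne with hlt | hgt
    · rw [fwd_of_lt hlt] at hv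
      have := permVal_lt σ' hlt
      have := j.is_le; omega
    · rw [fwd_of_gt hgt] at hv
      have : (i : ℕ) - j - 1 < n - j := by have := i.2; omega
      have := permVal_lt τ' this
      have := j.is_le; omega
  have hij' : i = j := Fin.ext hij
  subst hij'
  have hσeq : σ = σ' := by
    apply Equiv.ext
    rintro ⟨x, hx⟩
    have hv := hval x (by have := i.is_le; omega)
    rw [fwd_of_lt hx, fwd_of_lt hx] at hv
    have hv2 : permVal σ x = permVal σ' x := by omega
    rw [permVal_eq σ hx, permVal_eq σ' hx] at hv2
    exact Fin.ext hv2
  have hτeq : τ = τ' := by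
    apply Equiv.ext
    rintro ⟨x, hx⟩
    have hv := hval ((i : ℕ) + 1 + x) (by have := i.is_le; omega)
    rw [fwd_of_gt (by omega), fwd_of_gt (by omega)] at hv
    have harg : (i : ℕ) + 1 + x - i - 1 = x := by omega
    rw [harg, permVal_eq τ hx, permVal_eq τ' hx] at hv
    exact Fin.ext hv
  subst hσeq; subst hτeq; rfl

lemma g_surjective (n : ℕ) : Function.Surjective (g n) := by
  rintro ⟨π, hπ⟩
  set i : ℕ := (π.symm ⟨n, by omega⟩ : ℕ) with hidef
  have hi : i ≤ n := by have := (π.symm ⟨n, by omega⟩).2; omega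
  have hπi : permVal π i = n := by
    rw [permVal_eq π (by omega)]
    have : (⟨i, by omega⟩ : Fin (n+1)) = π.symm ⟨n, by omega⟩ := rfl
    rw [this, Equiv.apply_symm_apply]
  have hne_n : ∀ x : ℕ, x < n + 1 → x ≠ i → permVal π x < n := by
    intro x hx hxne
    have h1 := permVal_lt π hx
    have h2 : permVal π x ≠ n := fun h => hxne (permVal_inj π hx (by omega) (h.trans hπi.symm))
    omega
  -- separation: values before i are larger than values after i
  have hsep : ∀ a c : ℕ, a < i → i < c → c < n + 1 → permVal π c < permVal π a := by
    intro a c ha hc hcn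
    by_contra hcon
    push_neg at hcon
    have hne : permVal π a ≠ permVal π c := fun h => by
      have := permVal_inj π (by omega) hcn h; omega
    have h1 : permVal π a < permVal π c := lt_of_le_of_ne hcon hne
    have h2 : permVal π c < permVal π i := by
      rw [hπi]; exact hne_n c hcn (by omega)
    exact hπ ⟨a, i, c, ha, hc, hcn, h1, h2⟩
  -- values before i are at least n - i
  have hupper : ∀ a : ℕ, a < i → n - i ≤ permVal π a := by
    intro a ha
    have hS : (Finset.Ioo i (n + 1)).image (permVal π) ⊆ Finset.Iio (permVal π a) := by
      intro v hv
      obtain ⟨c, hc, rfl⟩ := Finset.mem_image.mp hv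
      obtain ⟨hc1, hc2⟩ := Finset.mem_Ioo.mp hc
      exact Finset.mem_Iio.mpr (hsep a c ha hc1 hc2)
    have hcard : ((Finset.Ioo i (n + 1)).image (permVal π)).card = n - i := by
      rw [Finset.card_image_of_injOn, Nat.card_Ioo]
      · omega
      · intro x hx y hy hxy
        obtain ⟨_, hx2⟩ := Finset.mem_Ioo.mp hx
        obtain ⟨_, hy2⟩ := Finset.mem_Ioo.mp hy
        exact permVal_inj π hx2 hy2 hxy
    have hle := Finset.card_le_card hS
    rw [hcard, Nat.card_Iio] at hle
    exact hle
  -- values after i are less than n - i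
  have hlower : ∀ c : ℕ, i < c → c < n + 1 → permVal π c < n - i := by
    intro c hc hcn
    have hπc : permVal π c < n := hne_n c hcn (by omega)
    have hT : (Finset.range (i + 1)).image (permVal π) ⊆ Finset.Ioc (permVal π c) n := by
      intro v hv
      obtain ⟨a, ha, rfl⟩ := Finset.mem_image.mp hv
      have ha' : a < i + 1 := Finset.mem_range.mp ha
      rcases lt_or_eq_of_le (Nat.lt_succ_iff.mp ha') with h' | h'
      · refine Finset.mem_Ioc.mpr ⟨hsep a c h' hc hcn, ?_⟩
        have := permVal_lt π (show a < n + 1 by omega); omega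
      · subst h'; rw [hπi]; exact Finset.mem_Ioc.mpr ⟨hπc, le_refl n⟩
    have hcard : ((Finset.range (i + 1)).image (permVal π)).card = i + 1 := by
      rw [Finset.card_image_of_injOn, Finset.card_range]
      intro x hx y hy hxy
      have hx' := Finset.mem_range.mp hx
      have hy' := Finset.mem_range.mp hy
      exact permVal_inj π (by omega) (by omega) hxy
    have hle := Finset.card_le_card hT
    rw [hcard, Nat.card_Ioc] at hle
    omega
  -- build σ
  let fσ : Fin i → Fin i := fun a =>
    ⟨permVal π a - (n - i), by
      have h1 := hne_n a (by have := a.2; omega) (by have := a.2; omega)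
      have h2 := hupper a a.2; omega⟩
  have hfσ : Function.Injective fσ := by
    rintro ⟨x, hx⟩ ⟨y, hy⟩ hxy
    have h' : permVal π x - (n - i) = permVal π y - (n - i) := congrArg Fin.val hxy
    have h1 := hupper x hx
    have h2 := hupper y hy
    apply Fin.ext
    show x = y
    exact permVal_inj π (by omega) (by omega) (by omega)
  let σ : Equiv.Perm (Fin i) := Equiv.ofBijective fσ (Finite.injective_iff_bijective.mp hfσ)
  have hσval : ∀ x : ℕ, x < i → permVal σ x = permVal π x - (n - i) := by
    intro x hx
    rw [permVal_eq σ hx]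
    rfl
  -- build τ
  let fτ : Fin (n - i) → Fin (n - i) := fun c =>
    ⟨permVal π (i + 1 + c), hlower (i + 1 + c) (by omega) (by have := c.2; omega)⟩
  have hfτ : Function.Injective fτ := by
    rintro ⟨x, hx⟩ ⟨y, hy⟩ hxy
    have h' : permVal π (i + 1 + x) = permVal π (i + 1 + y) := congrArg Fin.val hxy
    have := permVal_inj π (by omega) (by omega) h'
    apply Fin.ext
    show x = y
    omega
  let τ : Equiv.Perm (Fin (n - i)) := Equiv.ofBijective fτ (Finite.injective_iff_bijective.mp hfτ)
  have hτval : ∀ x : ℕ, x < n - i → permVal τ x = permVal π (i + 1 + x) := by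
    intro x hx
    rw [permVal_eq τ hx]
    rfl
  -- σ avoids 132
  have hσav : Avoids132 σ := by
    rintro ⟨a, b, c, hab, hbc, hci, h1, h2⟩
    rw [hσval a (by omega), hσval c hci] at h1
    rw [hσval c hci, hσval b (by omega)] at h2
    have ha := hupper a (by omega)
    have hb := hupper b (by omega)
    have hc := hupper c hci
    exact hπ ⟨a, b, c, hab, hbc, by omega, by omega, by omega⟩
  -- τ avoids 132
  have hτav : Avoids132 τ := by
    rintro ⟨a, b, c, hab, hbc, hcni, h1, h2⟩
    rw [hτval a (by omega), hτval c hcni] at h1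
    rw [hτval c hcni, hτval b (by omega)] at h2
    exact hπ ⟨i + 1 + a, i + 1 + b, i + 1 + c, by omega, by omega, by omega, h1, h2⟩
  refine ⟨⟨⟨i, by omega⟩, ⟨σ, hσav⟩, ⟨τ, hτav⟩⟩, ?_⟩
  apply Subtype.ext
  show asm i hi σ τ = π
  apply Equiv.ext
  rintro ⟨x, hx⟩
  apply Fin.ext
  show fwd n i (permVal σ) (permVal τ) x = _
  rw [← permVal_eq π hx]
  rcases lt_trichotomy x i with h | h | h
  · rw [fwd_of_lt h, hσval x h]
    have := hupper x h; omega
  · subst h; rw [fwd_of_eq, hπi]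
  · rw [fwd_of_gt h, hτval (x - i - 1) (by omega)]
    congr 1
    omega

/-- the count of 132-avoiding permutations -/
noncomputable def pcount (n : ℕ) : ℕ := Nat.card {π : Equiv.Perm (Fin n) // Avoids132 π}

lemma pcount_zero : pcount 0 = 1 := by
  have hav : ∀ π : Equiv.Perm (Fin 0), Avoids132 π := by
    rintro π ⟨a, b, c, _, _, hc, _⟩
    omega
  haveI : Unique {π : Equiv.Perm (Fin 0) // Avoids132 π} :=
    { default := ⟨1, hav 1⟩
      uniq := fun π => Subtype.ext (Subsingleton.elim _ _) }
  exact Nat.card_unique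

lemma pcount_succ (n : ℕ) :
    pcount (n + 1) = ∑ i : Fin (n + 1), pcount i * pcount (n - i) := by
  have hbij : Function.Bijective (g n) := ⟨g_injective n, g_surjective n⟩
  have hcard := Nat.card_eq_of_bijective (g n) hbij
  rw [pcount, ← hcard]
  show Nat.card (Σ i : Fin (n + 1), {σ : Equiv.Perm (Fin i) // Avoids132 σ} ×
    {τ : Equiv.Perm (Fin (n - i)) // Avoids132 τ}) = _
  rw [Nat.card_eq_fintype_card, Fintype.card_sigma]
  apply Finset.sum_congr rfl
  intro i _
  rw [Fintype.card_prod, pcount, pcount, Nat.card_eq_fintype_card, Nat.card_eq_fintype_card]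

lemma pcount_eq_catalan (n : ℕ) : pcount n = catalan n := by
  induction n using Nat.strong_induction_on with
  | _ n ih =>
    match n with
    | 0 => rw [pcount_zero, catalan_zero]
    | m + 1 =>
      rw [pcount_succ, catalan_succ]
      apply Finset.sum_congr rfl
      intro i _
      rw [ih i (by have := i.2; omega), ih (m - i) (by omega)]

end Stmt14

/-- The number of 132-avoiding permutations of `[n]` is the Catalan number
`C(2n, n) / (n + 1)`. -/
theorem stmt14 (n : ℕ) :
    Nat.card {π : Equiv.Perm (Fin n) // Avoids132 π} = (2 * n).choose n / (n + 1) := by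
  have h := Stmt14.pcount_eq_catalan n
  rw [Stmt14.pcount] at h
  rw [h, catalan_eq_centralBinom_div, Nat.centralBinom]
end

section
/- For any multiset M of n+1 non-negative integers, the number of plane trees with n edges whose multiset of vertex heights equals M is the same as the number of plane trees with n edges whose multiset of vertex right spanning widths equals M. Moreover, for any k and any multiset M′, the number of plane trees with n edges and k leaves whose multiset of leaf heights equals M′ equals the number of plane trees with n edges and k internal vertices whose multiset of internal-vertex right spanning widths equals M′. -/
/-- A plane tree: a root together with a linearly ordered list of subtrees. -/
inductive PlaneTree : Type
  | node : List PlaneTree → PlaneTree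

namespace PlaneTree

/-- Total number of edges in a forest (list of plane trees), counting the edges from
the virtual roots to their children. -/
def edgesList : List PlaneTree → ℕ
  | [] => 0
  | node cs :: ts => cs.length + edgesList cs + edgesList ts

/-- Number of edges of a plane tree. -/
def edgeCount (t : PlaneTree) : ℕ := edgesList [t]

/-- Multiset of heights of all vertices of a forest whose roots are at height `h`. -/
def heightsList (h : ℕ) : List PlaneTree → Multiset ℕ
  | [] => 0
  | node cs :: ts => {h} + heightsList (h + 1) cs + heightsList h ts

/-- Multiset of the heights of all vertices of a plane tree (root at height 0). -/
def vertexHeights (t : PlaneTree) : Multiset ℕ := heightsList 0 [t]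

/-- Multiset of heights of the leaves (childless vertices) of a forest whose roots are
at height `h`. -/
def leafHeightsList (h : ℕ) : List PlaneTree → Multiset ℕ
  | [] => 0
  | node cs :: ts =>
      (if cs.isEmpty then ({h} : Multiset ℕ) else 0) + leafHeightsList (h + 1) cs + leafHeightsList h ts

/-- Multiset of the heights of the leaves (childless non-root vertices) of a plane tree. -/
def leafHeights : PlaneTree → Multiset ℕ
  | node cs => leafHeightsList 1 cs

/-- Multiset of outdegrees of the internal vertices (vertices with at least one child)
of a forest. -/
def outdegList : List PlaneTree → Multiset ℕ
  | [] => 0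
  | node cs :: ts => (if cs.isEmpty then 0 else ({cs.length} : Multiset ℕ)) + outdegList cs + outdegList ts

/-- Multiset of the outdegrees of the internal vertices of a plane tree. -/
def internalOutdegs (t : PlaneTree) : Multiset ℕ := outdegList [t]

/-- Right spanning widths of all vertices of a forest, where `a` is the number of edges
attached from the right-hand side to the path from the forest's (virtual) root upwards.
A root `node cs` of the forest followed by `ts` has `ts.length` right siblings, so its
right spanning width is `cs.length + a + ts.length`. -/
def rswList (a : ℕ) : List PlaneTree → Multiset ℕ
  | [] => 0
  | node cs :: ts =>
      {cs.length + a + ts.length} + rswList (a + ts.length) cs + rswList a ts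

/-- Multiset of the right spanning widths of all vertices of a plane tree. -/
def vertexRSW : PlaneTree → Multiset ℕ
  | node cs => {cs.length} + rswList 0 cs

/-- Right spanning widths of the internal vertices of a forest (see `rswList`). -/
def rswIntList (a : ℕ) : List PlaneTree → Multiset ℕ
  | [] => 0
  | node cs :: ts =>
      (if cs.isEmpty then 0 else ({cs.length + a + ts.length} : Multiset ℕ)) +
        rswIntList (a + ts.length) cs + rswIntList a ts

/-- Multiset of the right spanning widths of the internal vertices of a plane tree. -/
def internalRSW : PlaneTree → Multiset ℕ
  | node cs => (if cs.isEmpty then 0 else ({cs.length} : Multiset ℕ)) + rswIntList 0 cs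

end PlaneTree

open PlaneTree

namespace PlaneTree

/-- Append a new last child to the root. -/
def appendChild : PlaneTree → PlaneTree → PlaneTree
  | node cs, b => node (cs ++ [b])

/-- The bijection from forests to trees. -/
def psi : List PlaneTree → PlaneTree
  | [] => node []
  | node ct :: ts => appendChild (psi ct) (psi ts)

/-- Size of a forest (number of vertices). -/
def sizeF : List PlaneTree → ℕ
  | [] => 0
  | node cs :: ts => 1 + sizeF cs + sizeF ts

end PlaneTree

namespace PlaneTree

lemma heights_shift (h : ℕ) (cs : List PlaneTree) :
    heightsList (h + 1) cs = (heightsList h cs).map (· + 1) := by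
  induction h, cs using heightsList.induct with
  | case1 h => simp [heightsList]
  | case2 h cs ts ih1 ih2 =>
      simp [heightsList, ih1, ih2, Multiset.map_singleton]

lemma leafHeights_shift (h : ℕ) (cs : List PlaneTree) :
    leafHeightsList (h + 1) cs = (leafHeightsList h cs).map (· + 1) := by
  induction h, cs using leafHeightsList.induct with
  | case1 h => simp [leafHeightsList]
  | case2 h cs ts ih1 ih2 =>
      by_cases hcs : cs.isEmpty <;>
        simp [leafHeightsList, ih1, ih2, hcs, Multiset.map_singleton]

lemma rsw_shift (a : ℕ) (cs : List PlaneTree) :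
    rswList (a + 1) cs = (rswList a cs).map (· + 1) := by
  induction a, cs using rswList.induct with
  | case1 a => simp [rswList]
  | case2 a cs ts ih1 ih2 =>
      have h1 : a + 1 + ts.length = a + ts.length + 1 := by omega
      have h2 : cs.length + (a + 1) + ts.length = cs.length + a + ts.length + 1 := by omega
      simp [rswList, h1, h2, ih1, ih2, Multiset.map_singleton]

lemma rswInt_shift (a : ℕ) (cs : List PlaneTree) :
    rswIntList (a + 1) cs = (rswIntList a cs).map (· + 1) := by
  induction a, cs using rswIntList.induct with
  | case1 a => simp [rswIntList]
  | case2 a cs ts ih1 ih2 =>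
      have h1 : a + 1 + ts.length = a + ts.length + 1 := by omega
      have h2 : cs.length + (a + 1) + ts.length = cs.length + a + ts.length + 1 := by omega
      by_cases hcs : cs.isEmpty <;>
        simp [rswIntList, h1, h2, ih1, ih2, hcs, Multiset.map_singleton]

end PlaneTree
namespace PlaneTree

/-- Internal-RSW counting the root unconditionally. -/
def fIRSW : PlaneTree → Multiset ℕ
  | node cs => {cs.length} + rswIntList 0 cs

lemma edgesList_append (xs ys : List PlaneTree) :
    edgesList (xs ++ ys) = edgesList xs + edgesList ys := by
  induction xs with
  | nil => simp [edgesList]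
  | cons t ts ih => cases t with | node cs => simp [edgesList, ih]; omega

lemma rsw_append (a : ℕ) (ds : List PlaneTree) (b : PlaneTree) :
    rswList a (ds ++ [b]) = (rswList a ds).map (· + 1) + rswList a [b] := by
  induction ds generalizing a with
  | nil => simp [rswList]
  | cons t ts ih =>
      cases t with
      | node cs =>
        have h1 : a + (ts.length + 1) = (a + ts.length) + 1 := by omega
        have h2 : cs.length + a + (ts.length + 1) = cs.length + a + ts.length + 1 := by omega
        simp only [List.cons_append, rswList, List.length_append, List.length_cons,
          List.length_nil, Nat.zero_add, h1, h2, rsw_shift, ih, Multiset.map_add,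
          Multiset.map_singleton]
        abel

lemma rswInt_append (a : ℕ) (ds : List PlaneTree) (b : PlaneTree) :
    rswIntList a (ds ++ [b]) = (rswIntList a ds).map (· + 1) + rswIntList a [b] := by
  induction ds generalizing a with
  | nil => simp [rswIntList]
  | cons t ts ih =>
      cases t with
      | node cs =>
        have h1 : a + (ts.length + 1) = (a + ts.length) + 1 := by omega
        have h3 : cs.length + (a + (ts.length + 1)) = cs.length + (a + ts.length) + 1 := by omega
        have h4 : cs.length + a + (ts.length + 1) = cs.length + a + ts.length + 1 := by omega
        by_cases hcs : cs.isEmpty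
        · simp only [List.cons_append, rswIntList, List.length_append, List.length_cons,
            List.length_nil, Nat.zero_add, ih, Multiset.map_add, hcs, if_true]
          rw [h1, rswInt_shift]
          abel
        · simp only [List.cons_append, rswIntList, List.length_append, List.length_cons,
            List.length_nil, Nat.zero_add, ih, Multiset.map_add, hcs,
            Bool.false_eq_true, if_false, Multiset.map_singleton]
          rw [h1, rswInt_shift, h4]
          abel

lemma vertexRSW_appendChild (A b : PlaneTree) :
    vertexRSW (appendChild A b) = (vertexRSW A).map (· + 1) + vertexRSW b := by
  cases A with
  | node ds =>
    cases b with
    | node bs =>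
      simp only [appendChild, vertexRSW, rsw_append, rswList, List.length_append,
        List.length_cons, List.length_nil, Multiset.map_add, Multiset.map_singleton]
      simp only [Nat.add_zero, Nat.zero_add]
      abel

lemma fIRSW_appendChild (A b : PlaneTree) :
    fIRSW (appendChild A b) = (fIRSW A).map (· + 1) + internalRSW b := by
  cases A with
  | node ds =>
    cases b with
    | node bs =>
      by_cases hbs : bs.isEmpty <;>
        · simp only [appendChild, fIRSW, internalRSW, rswInt_append, rswIntList,
            List.length_append, List.length_cons, List.length_nil, Multiset.map_add,
            Multiset.map_singleton, hbs, if_true, if_false, Nat.add_zero, Nat.zero_add]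
          abel

end PlaneTree
namespace PlaneTree

lemma edges_appendChild (A b : PlaneTree) :
    edgesList [appendChild A b] = edgesList [A] + edgesList [b] + 1 := by
  cases A with
  | node ds =>
    simp [appendChild, edgesList, edgesList_append]
    omega

lemma internalRSW_appendChild (A b : PlaneTree) :
    internalRSW (appendChild A b) = fIRSW (appendChild A b) := by
  cases A with
  | node ds => simp [appendChild, internalRSW, fIRSW]

lemma main_stats (N : ℕ) : ∀ cs : List PlaneTree, sizeF cs ≤ N →
    edgesList [psi cs] = cs.length + edgesList cs ∧
    vertexRSW (psi cs) = {0} + heightsList 1 cs ∧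
    fIRSW (psi cs) = (if cs.isEmpty then ({0} : Multiset ℕ) else 0) + leafHeightsList 1 cs := by
  induction N with
  | zero =>
      rintro (_ | ⟨⟨ct⟩, ts⟩) h
      · refine ⟨by simp [psi, edgesList], by simp [psi, vertexRSW, rswList, heightsList],
          by simp [psi, fIRSW, rswIntList, leafHeightsList]⟩
      · exfalso; simp only [sizeF] at h; omega
  | succ N ih =>
      rintro (_ | ⟨⟨ct⟩, ts⟩) h
      · refine ⟨by simp [psi, edgesList], by simp [psi, vertexRSW, rswList, heightsList],
          by simp [psi, fIRSW, rswIntList, leafHeightsList]⟩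
      · simp only [sizeF] at h
        have hct : sizeF ct ≤ N := by omega
        have hts : sizeF ts ≤ N := by omega
        obtain ⟨e1, v1, f1⟩ := ih ct hct
        obtain ⟨e2, v2, f2⟩ := ih ts hts
        have hpsi : psi (node ct :: ts) = appendChild (psi ct) (psi ts) := by
          simp [psi]
        have hint : internalRSW (psi ts) = leafHeightsList 1 ts := by
          match ts, f2 with
          | [], _ => simp [psi, internalRSW, rswIntList, leafHeightsList]
          | node u :: us, f2 =>
              have hp : psi (node u :: us) = appendChild (psi u) (psi us) := by simp [psi]
              rw [hp, internalRSW_appendChild, ← hp, f2]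
              simp
        refine ⟨?_, ?_, ?_⟩
        · rw [hpsi, edges_appendChild, e1, e2]
          simp [edgesList]
          omega
        · rw [hpsi, vertexRSW_appendChild, v1, v2]
          simp only [heightsList, Multiset.map_add, Multiset.map_singleton,
            Nat.zero_add, ← heights_shift]
          abel
        · rw [hpsi, fIRSW_appendChild, f1, hint]
          simp only [leafHeightsList, Multiset.map_add, List.isEmpty_cons,
            Bool.false_eq_true, if_false, ← leafHeights_shift]
          by_cases hc : ct.isEmpty
          · simp [hc]; try abel
          · simp [hc]; try abel

end PlaneTree
namespace PlaneTree

lemma card_outdeg_rswInt (a : ℕ) (cs : List PlaneTree) :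
    Multiset.card (outdegList cs) = Multiset.card (rswIntList a cs) := by
  induction a, cs using rswIntList.induct with
  | case1 a => simp [outdegList, rswIntList]
  | case2 a cs ts ih1 ih2 =>
      by_cases hcs : cs.isEmpty <;>
        simp [outdegList, rswIntList, hcs, ih1, ih2]

lemma card_internal (t : PlaneTree) :
    Multiset.card (internalOutdegs t) = Multiset.card (internalRSW t) := by
  cases t with
  | node cs =>
      by_cases hcs : cs.isEmpty <;>
        simp [internalOutdegs, outdegList, internalRSW, hcs, card_outdeg_rswInt 0 cs]

lemma sizeF_append (xs ys : List PlaneTree) : sizeF (xs ++ ys) = sizeF xs + sizeF ys := by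
  induction xs with
  | nil => simp [sizeF]
  | cons t ts ih => cases t with | node cs => simp [sizeF, ih]; omega

lemma sizeF_pos (t : PlaneTree) : 1 ≤ sizeF [t] := by
  cases t with | node cs => simp [sizeF]

lemma psi_inj (N : ℕ) : ∀ cs cs' : List PlaneTree, sizeF cs ≤ N →
    psi cs = psi cs' → cs = cs' := by
  induction N with
  | zero =>
      rintro (_ | ⟨⟨ct⟩, ts⟩) cs' h heq
      · match cs', heq with
        | [], _ => rfl
        | node ct' :: ts', heq =>
            exfalso
            rw [show psi (node ct' :: ts') = appendChild (psi ct') (psi ts') by simp [psi]] at heq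
            cases hpc : psi ct' with
            | node l =>
                rw [hpc] at heq
                simp [psi, appendChild] at heq
      · exfalso; simp only [sizeF] at h; omega
  | succ N ih =>
      rintro (_ | ⟨⟨ct⟩, ts⟩) cs' h heq
      · match cs', heq with
        | [], _ => rfl
        | node ct' :: ts', heq =>
            exfalso
            rw [show psi (node ct' :: ts') = appendChild (psi ct') (psi ts') by simp [psi]] at heq
            cases hpc : psi ct' with
            | node l =>
                rw [hpc] at heq
                simp [psi, appendChild] at heq
      · match cs', heq with
        | [], heq =>
            exfalso
            rw [show psi (node ct :: ts) = appendChild (psi ct) (psi ts) by simp [psi]] at heq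
            cases hpc : psi ct with
            | node l =>
                rw [hpc] at heq
                simp [psi, appendChild] at heq
        | node ct' :: ts', heq =>
            simp only [sizeF] at h
            rw [show psi (node ct :: ts) = appendChild (psi ct) (psi ts) by simp [psi],
              show psi (node ct' :: ts') = appendChild (psi ct') (psi ts') by simp [psi]] at heq
            cases hpc : psi ct with
            | node l =>
            cases hpc' : psi ct' with
            | node l' =>
                rw [hpc, hpc'] at heq
                simp only [appendChild, node.injEq] at heq
                obtain ⟨h1, h2⟩ := List.append_inj' heq (by simp)
                have hts : ts = ts' := ih ts ts' (by omega) (by simpa using h2)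
                have hct : ct = ct' := ih ct ct' (by omega) (by rw [hpc, hpc', h1])
                rw [hts, hct]

lemma psi_surj (N : ℕ) : ∀ u : PlaneTree, sizeF [u] ≤ N → ∃ cs, psi cs = u := by
  induction N with
  | zero =>
      intro u h
      exact absurd (le_trans (sizeF_pos u) h) (by omega)
  | succ N ih =>
      rintro ⟨(_ | ⟨x, l⟩)⟩ h
      · exact ⟨[], by simp [psi]⟩
      · set L := x :: l with hL
        have hne : L ≠ [] := by simp [hL]
        have hsplit : L.dropLast ++ [L.getLast hne] = L := List.dropLast_append_getLast hne
        have hsz : sizeF [node L] = 1 + sizeF L := by simp [sizeF]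
        have hszL : sizeF L = sizeF L.dropLast + sizeF [L.getLast hne] := by
          conv_lhs => rw [← hsplit]
          rw [sizeF_append]
        have hg1 : 1 ≤ sizeF [L.getLast hne] := sizeF_pos _
        have hd : sizeF [node L.dropLast] ≤ N := by
          simp only [sizeF] at h ⊢
          omega
        have hgl : sizeF [L.getLast hne] ≤ N := by
          simp only [sizeF] at h
          omega
        obtain ⟨cs1, h1⟩ := ih (node L.dropLast) hd
        obtain ⟨cs2, h2⟩ := ih (L.getLast hne) hgl
        refine ⟨node cs1 :: cs2, ?_⟩
        rw [show psi (node cs1 :: cs2) = appendChild (psi cs1) (psi cs2) by simp [psi],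
          h1, h2]
        simp [appendChild, hsplit]

end PlaneTree
namespace PlaneTree

/-- The bijection on plane trees. -/
def phi : PlaneTree → PlaneTree
  | node cs => psi cs

lemma phi_bijective : Function.Bijective phi := by
  constructor
  · rintro ⟨cs⟩ ⟨cs'⟩ h
    simp only [phi] at h
    rw [psi_inj (sizeF cs) cs cs' le_rfl h]
  · intro u
    obtain ⟨cs, hcs⟩ := psi_surj (sizeF [u]) u le_rfl
    exact ⟨node cs, by simp [phi, hcs]⟩

lemma phi_edgeCount (T : PlaneTree) : edgeCount (phi T) = edgeCount T := by
  cases T with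
  | node cs =>
      have := (main_stats (sizeF cs) cs le_rfl).1
      simp [phi, edgeCount, this, edgesList]

lemma phi_vertexRSW (T : PlaneTree) : vertexRSW (phi T) = vertexHeights T := by
  cases T with
  | node cs =>
      have := (main_stats (sizeF cs) cs le_rfl).2.1
      simp [phi, vertexHeights, heightsList, this]

lemma phi_internalRSW (T : PlaneTree) : internalRSW (phi T) = leafHeights T := by
  cases T with
  | node cs =>
      have hf := (main_stats (sizeF cs) cs le_rfl).2.2
      match cs, hf with
      | [], _ => simp [phi, psi, internalRSW, rswIntList, leafHeights, leafHeightsList]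
      | node u :: us, hf =>
          have hp : psi (node u :: us) = appendChild (psi u) (psi us) := by simp [psi]
          simp only [phi, leafHeights]
          rw [hp, internalRSW_appendChild, ← hp, hf]
          simp

lemma phi_cardInternal (T : PlaneTree) :
    Multiset.card (internalOutdegs (phi T)) = Multiset.card (leafHeights T) := by
  rw [card_internal, phi_internalRSW]

end PlaneTree


/-- The number of plane trees with `n` edges whose multiset of vertex heights is `M`
equals the number of plane trees with `n` edges whose multiset of vertex right spanning
widths is `M`; moreover, the number of plane trees with `n` edges and `k` leaves whose
multiset of leaf heights is `M'` equals the number of plane trees with `n` edges and `k`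
internal vertices whose multiset of internal-vertex right spanning widths is `M'`. -/
theorem stmt16 (n k : ℕ) (M M' : Multiset ℕ) (hM : Multiset.card M = n + 1) :
    (Nat.card {T : PlaneTree // edgeCount T = n ∧ vertexHeights T = M} =
      Nat.card {T : PlaneTree // edgeCount T = n ∧ vertexRSW T = M})
    ∧ (Nat.card {T : PlaneTree // edgeCount T = n ∧
          Multiset.card (leafHeights T) = k ∧ leafHeights T = M'} =
      Nat.card {T : PlaneTree // edgeCount T = n ∧
          Multiset.card (internalOutdegs T) = k ∧ internalRSW T = M'}) := by
  let e : PlaneTree ≃ PlaneTree := Equiv.ofBijective phi phi_bijective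
  constructor
  · exact Nat.card_congr <| Equiv.subtypeEquiv e fun T => by
      simp only [e, Equiv.ofBijective_apply, phi_edgeCount, phi_vertexRSW]
  · exact Nat.card_congr <| Equiv.subtypeEquiv e fun T => by
      simp only [e, Equiv.ofBijective_apply, phi_edgeCount, phi_internalRSW,
        phi_cardInternal]
end
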